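/- Consider the deep network H₁ = W₀X, X_k = φ(H_k), H_{k+1} = W_k X_k (k = 1,…,L). Suppose: (i) φ : ℝ → ℝ is strictly monotonic and surjective onto ℝ; (ii) rank(X) = m; (iii) n_k > n_{k+1} for all k ∈ {1,…,L}. Then for every target matrix H̃ ∈ ℝ^{n_{L+1}×m} and all weight matrices W₁,…,W_L of full row rank (rank(W_k) = n_{k+1}), there exists W₀ ∈ ℝ^{n₁×n₀} such that the network output satisfies H_{L+1}(W₀, W₁,…,W_L) = H̃. -/

import Mathlib

/-!
Full-row-rank layer matrices `W_k` have right inverses and `φ` can be inverted entrywise, so a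
target output can be pulled back layer by layer to a prescribed `H₁`. Finally `H₁ = W₀ X` is
solvable for `W₀` because `X` has full column rank, hence a left inverse.
-/

/-- Pre-activations of the network `H₁ = W₀ X`, `X_k = φ(H_k)`, `H_{k+1} = W_k X_k`:
`preAct … k` is the matrix `H_{k+1}` (so `preAct … 0 = H₁` and `preAct … L = H_{L+1}`). -/
noncomputable def preAct (φ : ℝ → ℝ) (d : ℕ → ℕ) {m : ℕ}
    (X : Matrix (Fin (d 0)) (Fin m) ℝ)
    (W₀ : Fin (d 1) → Fin (d 0) → ℝ)
    (W : (k : ℕ) → Fin (d (k + 1)) → Fin (d k) → ℝ) :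
    (k : ℕ) → Matrix (Fin (d (k + 1))) (Fin m) ℝ
  | 0 => Matrix.of W₀ * X
  | (k + 1) => Matrix.of (W (k + 1)) * ((preAct φ d X W₀ W k).map φ)

namespace Matrix

theorem exists_map_eq_of_surjective {m n α β : Type*} {f : α → β} (hf : Function.Surjective f)
    (T : Matrix m n β) : ∃ S : Matrix m n α, S.map f = T :=
  ⟨T.map (Function.surjInv hf), by ext; simp [Function.surjInv_eq hf]⟩

variable {m n K : Type*} [Fintype m] [Fintype n] [Field K]

theorem mulVec_surjective_of_rank_eq_card_height {A : Matrix m n K}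
    (h : A.rank = Fintype.card m) : Function.Surjective A.mulVec := by
  rw [← coe_mulVecLin, ← LinearMap.range_eq_top]
  exact Submodule.eq_top_of_finrank_eq (by rwa [Module.finrank_fintype_fun_eq_card])

theorem exists_mul_eq_one_of_rank_eq_card_height [DecidableEq m] {A : Matrix m n K}
    (h : A.rank = Fintype.card m) : ∃ B : Matrix n m K, A * B = 1 :=
  mulVec_surjective_iff_exists_right_inverse.1 (mulVec_surjective_of_rank_eq_card_height h)

theorem exists_mul_eq_one_of_rank_eq_card_width [DecidableEq n] {A : Matrix m n K}
    (h : A.rank = Fintype.card n) : ∃ B : Matrix n m K, B * A = 1 := by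
  obtain ⟨C, hC⟩ := exists_mul_eq_one_of_rank_eq_card_height (A := Aᵀ) (by rwa [rank_transpose])
  exact ⟨Cᵀ, by rw [← transpose_transpose A, ← transpose_mul, hC, transpose_one]⟩

end Matrix

theorem recovering_first_layer_general
    (m L : ℕ) (d : ℕ → ℕ)
    (φ : ℝ → ℝ) (hsurj : Function.Surjective φ)
    (X : Matrix (Fin (d 0)) (Fin m) ℝ) (hX : X.rank = m)
    (H' : Matrix (Fin (d (L + 1))) (Fin m) ℝ)
    (W : (k : ℕ) → Fin (d (k + 1)) → Fin (d k) → ℝ)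
    (hfull : ∀ k, 1 ≤ k → k ≤ L → (Matrix.of (W k)).rank = d (k + 1)) :
    ∃ W₀ : Fin (d 1) → Fin (d 0) → ℝ, preAct φ d X W₀ W L = H' := by
  induction L with
  | zero =>
    obtain ⟨B, hB⟩ := Matrix.exists_mul_eq_one_of_rank_eq_card_width
      (hX.trans (Fintype.card_fin m).symm)
    exact ⟨H' * B, by
      change H' * B * X = H'
      rw [Matrix.mul_assoc, hB, Matrix.mul_one]⟩
  | succ L ih =>
    obtain ⟨B, hB⟩ := Matrix.exists_mul_eq_one_of_rank_eq_card_height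
      ((hfull (L + 1) L.succ_pos le_rfl).trans (Fintype.card_fin _).symm)
    obtain ⟨S, hS⟩ := Matrix.exists_map_eq_of_surjective hsurj (B * H')
    obtain ⟨W₀, hW₀⟩ := ih S (fun k h1 h2 => hfull k h1 (by omega))
    exact ⟨W₀, by rw [preAct, hW₀, hS, ← Matrix.mul_assoc, hB, Matrix.one_mul]⟩

/-- Lemma (recovering `W₀`): if `φ` is a strictly monotone surjection of `ℝ`,
`rank X = m`, and the widths satisfy `n_k > n_{k+1}` for `k = 1,…,L`, then for every
target output `H̃ ∈ ℝ^{n_{L+1}×m}` and all full-row-rank weights `W₁,…,W_L` there is a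
first-layer weight matrix `W₀` with network output `H_{L+1}(W₀, W₁,…,W_L) = H̃`. -/
theorem recovering_first_layer
    (m L : ℕ) (d : ℕ → ℕ)
    (φ : ℝ → ℝ) (hmono : StrictMono φ ∨ StrictAnti φ) (hsurj : Function.Surjective φ)
    (X : Matrix (Fin (d 0)) (Fin m) ℝ) (hX : X.rank = m)
    (hwidth : ∀ k, 1 ≤ k → k ≤ L → d (k + 1) < d k)
    (H' : Matrix (Fin (d (L + 1))) (Fin m) ℝ)
    (W : (k : ℕ) → Fin (d (k + 1)) → Fin (d k) → ℝ)
    (hfull : ∀ k, 1 ≤ k → k ≤ L → (Matrix.of (W k)).rank = d (k + 1)) :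
    ∃ W₀ : Fin (d 1) → Fin (d 0) → ℝ, preAct φ d X W₀ W L = H' :=
  recovering_first_layer_general m L d φ hsurj X hX H' W hfull
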